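/- Let (ξ(k))_{k∈ℤ} be i.i.d. Bernoulli(1/2) random variables. Then for every integer n ≥ 1, every l ∈ ℤ and every ε ∈ {−1, +1} with (l, ε) ≠ (−n, +1), the probability that ξ(−n + j) = ξ(l + ε·j) holds for all j ∈ {0, 1, ..., 2n} is at most 2^{−n}. Consequently, the probability that the word ξ(−n), ξ(−n+1), ..., ξ(n) occurs (read forwards or backwards) at some other position within [−n^{10}, n^{10}] is at most 4·n^{10}·2^{−n}. -/

import Mathlib

/-!
Fix a position `(l, ε)`. If `k` indices `j` give `2k` pairwise distinct sites `-n + j` and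
`l + ε j`, the matching event is covered by `2^k` cylinder events (one per choice of common
values), each of probability `2^{-2k}`, so it has probability at most `2^{-k}`. For a forward
read with shift `d = l + n ≠ 0` take the `j ≤ 2n` lying in even-numbered blocks of length `|d|`:
at least `n + 1` of them. For a backward read take the `j` with `2j` on the more populous side of
`l + n`: at least `n` of them. A union bound over the `2n^10` forward and `2n^10 + 1` backward
positions then gives `(3n^10 + 1) 2^{-n} ≤ 4 n^10 2^{-n}`.
-/

open MeasureTheory ProbabilityTheory Finset

lemma exists_subset_range_sub_ne {d : ℤ} (hd : d ≠ 0) (m : ℕ) :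
    ∃ K ⊆ range m, m ≤ 2 * #K ∧ ∀ j ∈ K, ∀ j' ∈ K, (j : ℤ) - j' ≠ d := by
  set e := d.natAbs
  have he : 0 < e := Int.natAbs_pos.2 hd
  have hshift (j : ℕ) : (j + e) / e = j / e + 1 := Nat.add_div_right j he
  have hge {j : ℕ} (hj : ¬j / e % 2 = 0) : e ≤ j :=
    not_lt.1 fun hlt => hj (by rw [Nat.div_eq_of_lt hlt])
  refine ⟨(range m).filter (fun j => j / e % 2 = 0), filter_subset _ _, ?_, ?_⟩
  · have hcompl : #((range m).filter (fun j => ¬j / e % 2 = 0)) ≤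
        #((range m).filter (fun j => j / e % 2 = 0)) := by
      refine card_le_card_of_injOn (· - e) (fun j hj => ?_) fun j hj j' hj' hjj' => ?_
      · simp only [mem_coe, mem_filter, mem_range] at hj ⊢
        obtain ⟨i, rfl⟩ : ∃ i, j = i + e := ⟨j - e, by have := hge hj.2; omega⟩
        have := hshift i
        simp only [Nat.add_sub_cancel]
        omega
      · simp only [mem_coe, mem_filter, mem_range] at hj hj' hjj'
        have := hge hj.2
        have := hge hj'.2
        omega
    have hsplit := card_filter_add_card_filter_not (s := range m) (p := fun j => j / e % 2 = 0)
    rw [card_range] at hsplit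
    omega
  · intro j hj j' hj' hjj'
    simp only [mem_filter, mem_range] at hj hj'
    rcases Int.natAbs_eq d with hde | hde
    · obtain rfl : j = j' + e := by omega
      have := hshift j'
      omega
    · obtain rfl : j' = j + e := by omega
      have := hshift j
      omega

lemma exists_subset_range_add_ne (t : ℤ) (m : ℕ) :
    ∃ K ⊆ range m, m ≤ 2 * #K + 1 ∧ ∀ j ∈ K, ∀ j' ∈ K, (j : ℤ) + j' ≠ t := by
  set below := (range m).filter (fun j : ℕ => 2 * (j : ℤ) < t)
  set above := (range m).filter (fun j : ℕ => t < 2 * (j : ℤ))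
  set middle := (range m).filter (fun j : ℕ => 2 * (j : ℤ) = t)
  have hmiddle : #middle ≤ 1 :=
    card_le_one.2 fun j hj j' hj' => by simp only [middle, mem_filter] at hj hj'; omega
  have hcover : range m ⊆ below ∪ above ∪ middle := by
    intro j hj
    simp only [below, above, middle, mem_union, mem_filter, mem_range] at hj ⊢
    omega
  have hcard : m ≤ #below + #above + #middle :=
    calc m = #(range m) := (card_range m).symm
      _ ≤ #(below ∪ above ∪ middle) := card_le_card hcover
      _ ≤ #below + #above + #middle :=
        (card_union_le _ _).trans (Nat.add_le_add_right (card_union_le _ _) _)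
  rcases le_total #above #below with h | h
  · refine ⟨below, filter_subset _ _, by omega, fun j hj j' hj' => ?_⟩
    simp only [below, mem_filter] at hj hj'
    omega
  · refine ⟨above, filter_subset _ _, by omega, fun j hj j' hj' => ?_⟩
    simp only [above, mem_filter] at hj hj'
    omega

section
variable {Ω : Type*} [MeasurableSpace Ω] {P : Measure Ω} [IsProbabilityMeasure P]
  {α : Type*} {ξ : Ω → α → Bool}

lemma measure_coord_eq_half (hξmeas : ∀ k : α, Measurable fun ω => ξ ω k)
    (hξbern : ∀ k : α, P {ω | ξ ω k = true} = 1 / 2) (k : α) (v : Bool) :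
    P {ω | ξ ω k = v} = 1 / 2 := by
  cases v
  · have hcompl : {ω | ξ ω k = false} = {ω | ξ ω k = true}ᶜ := by ext; simp
    have hmeas : MeasurableSet {ω | ξ ω k = true} := hξmeas k (measurableSet_singleton true)
    rw [hcompl, prob_compl_eq_one_sub hmeas, hξbern,
      one_div, ENNReal.one_sub_inv_two]
  · exact hξbern k

variable (hξmeas : ∀ k : α, Measurable fun ω => ξ ω k)
    (hξindep : iIndepFun (fun k ω => ξ ω k) P)
    (hξbern : ∀ k : α, P {ω | ξ ω k = true} = 1 / 2)
include hξmeas hξindep hξbern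

lemma measure_forall_coord_eq {ι : Type*} [Fintype ι] {c : ι → α} (hc : c.Injective)
    (u : ι → Bool) :
    P {ω | ∀ i, ξ ω (c i) = u i} = (1 / 2) ^ Fintype.card ι := by
  have hcyl : {ω | ∀ i, ξ ω (c i) = u i} = ⋂ i, {ω | ξ ω (c i) = u i} := by ext; simp
  rw [hcyl, (hξindep.precomp hc).meas_iInter (s := fun i => {ω | ξ ω (c i) = u i})
    fun i => ⟨{u i}, measurableSet_singleton _, rfl⟩]
  simp only [measure_coord_eq_half hξmeas hξbern, prod_const, card_univ]

lemma measure_forall_coord_eq_coord_le {ι : Type*} [Fintype ι] {x y : ι → α}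
    (hxy : (Sum.elim x y).Injective) :
    P {ω | ∀ i, ξ ω (x i) = ξ ω (y i)} ≤ (1 / 2) ^ Fintype.card ι := by
  classical
  have hcover : {ω | ∀ i, ξ ω (x i) = ξ ω (y i)} ⊆
      ⋃ v : ι → Bool, {ω | ∀ p, ξ ω (Sum.elim x y p) = Sum.elim v v p} := by
    intro ω hω
    refine Set.mem_iUnion.2 ⟨fun i => ξ ω (x i), ?_⟩
    rintro (i | i)
    · rfl
    · exact (hω i).symm
  calc P {ω | ∀ i, ξ ω (x i) = ξ ω (y i)}
      ≤ ∑ v : ι → Bool, P {ω | ∀ p, ξ ω (Sum.elim x y p) = Sum.elim v v p} :=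
        (measure_mono hcover).trans (measure_iUnion_fintype_le P _)
    _ = 2 ^ Fintype.card ι * ((1 / 2) ^ Fintype.card ι * (1 / 2) ^ Fintype.card ι) := by
        simp only [measure_forall_coord_eq hξmeas hξindep hξbern hxy, sum_const, card_univ,
          Fintype.card_fun, Fintype.card_bool, Fintype.card_sum, nsmul_eq_mul, pow_add]
        norm_cast
    _ = (1 / 2) ^ Fintype.card ι := by
        rw [← mul_assoc, ← mul_pow, ENNReal.mul_div_cancel two_ne_zero ENNReal.ofNat_ne_top,
          one_pow, one_mul]

end

def WordOccursAt (s : ℤ → Bool) (n : ℕ) (l ε : ℤ) : Prop :=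
  ∀ j : ℕ, j ≤ 2 * n → s (-(n : ℤ) + j) = s (l + ε * j)

section
variable {Ω : Type*} [MeasurableSpace Ω] {P : Measure Ω} [IsProbabilityMeasure P]
  {ξ : Ω → ℤ → Bool} (hξmeas : ∀ k : ℤ, Measurable fun ω => ξ ω k)
  (hξindep : iIndepFun (fun k ω => ξ ω k) P) (hξbern : ∀ k : ℤ, P {ω | ξ ω k = true} = 1 / 2)
include hξmeas hξindep hξbern

lemma measure_wordOccursAt_le_of_subset {n : ℕ} {l ε : ℤ} (hε : ε = 1 ∨ ε = -1)
    {K : Finset ℕ} (hK : K ⊆ range (2 * n + 1))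
    (hdisj : ∀ j ∈ K, ∀ j' ∈ K, -(n : ℤ) + j ≠ l + ε * j') :
    P {ω | WordOccursAt (ξ ω) n l ε} ≤ (1 / 2) ^ #K := by
  have hinj : (Sum.elim (fun j : K => -(n : ℤ) + j) (fun j : K => l + ε * j)).Injective := by
    refine Function.Injective.sumElim (fun j j' h => Subtype.ext ?_) (fun j j' h => Subtype.ext ?_)
      fun j j' => hdisj j j.2 j' j'.2
    · simpa using h
    · rcases hε with rfl | rfl <;> omega
  calc P {ω | WordOccursAt (ξ ω) n l ε}
      ≤ P {ω | ∀ j : K, ξ ω (-(n : ℤ) + j) = ξ ω (l + ε * j)} :=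
        measure_mono fun ω hω j => hω j (Nat.lt_succ_iff.1 (mem_range.1 (hK j.2)))
    _ ≤ (1 / 2) ^ #K := by
        simpa using measure_forall_coord_eq_coord_le hξmeas hξindep hξbern hinj

lemma measure_wordOccursAt_forward_le {n : ℕ} {l : ℤ} (hl : l ≠ -n) :
    P {ω | WordOccursAt (ξ ω) n l 1} ≤ (1 / 2) ^ (n + 1) := by
  obtain ⟨K, hK, hcard, hdiff⟩ :=
    exists_subset_range_sub_ne (d := l + n) (by omega) (2 * n + 1)
  calc P {ω | WordOccursAt (ξ ω) n l 1} ≤ (1 / 2) ^ #K :=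
        measure_wordOccursAt_le_of_subset hξmeas hξindep hξbern (.inl rfl) hK
          fun j hj j' hj' h => hdiff j hj j' hj' (by omega)
    _ ≤ (1 / 2) ^ (n + 1) := pow_le_pow_of_le_one (by norm_num) (by norm_num) (by omega)

lemma measure_wordOccursAt_backward_le (n : ℕ) (l : ℤ) :
    P {ω | WordOccursAt (ξ ω) n l (-1)} ≤ (1 / 2) ^ n := by
  obtain ⟨K, hK, hcard, hsum⟩ := exists_subset_range_add_ne (l + n) (2 * n + 1)
  calc P {ω | WordOccursAt (ξ ω) n l (-1)} ≤ (1 / 2) ^ #K :=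
        measure_wordOccursAt_le_of_subset hξmeas hξindep hξbern (.inr rfl) hK
          fun j hj j' hj' h => hsum j hj j' hj' (by omega)
    _ ≤ (1 / 2) ^ n := pow_le_pow_of_le_one (by norm_num) (by norm_num) (by omega)

lemma measure_wordOccursAt_le {n : ℕ} {l ε : ℤ} (hε : ε = 1 ∨ ε = -1)
    (hne : ¬(l = -(n : ℤ) ∧ ε = 1)) :
    P {ω | WordOccursAt (ξ ω) n l ε} ≤ (1 / 2) ^ n := by
  rcases hε with rfl | rfl
  · exact (measure_wordOccursAt_forward_le hξmeas hξindep hξbern fun h => hne ⟨h, rfl⟩).trans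
      (pow_le_pow_of_le_one (by norm_num) (by norm_num) n.le_succ)
  · exact measure_wordOccursAt_backward_le hξmeas hξindep hξbern n l

lemma measure_exists_wordOccursAt_le {n M : ℕ} (hnM : n ≤ M) :
    P {ω | ∃ l ε : ℤ, (ε = 1 ∨ ε = -1) ∧ |l| ≤ M ∧ ¬(l = -(n : ℤ) ∧ ε = 1) ∧
      WordOccursAt (ξ ω) n l ε} ≤ (3 * M + 1) * (1 / 2) ^ n := by
  set L := Icc (-(M : ℤ)) M
  have hnL : -(n : ℤ) ∈ L := by simp only [L, mem_Icc]; omega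
  have hcover : {ω | ∃ l ε : ℤ, (ε = 1 ∨ ε = -1) ∧ |l| ≤ M ∧ ¬(l = -(n : ℤ) ∧ ε = 1) ∧
      WordOccursAt (ξ ω) n l ε} ⊆ (⋃ l ∈ L.erase (-n), {ω | WordOccursAt (ξ ω) n l 1}) ∪
        ⋃ l ∈ L, {ω | WordOccursAt (ξ ω) n l (-1)} := by
    rintro ω ⟨l, ε, hε, hl, hne, hω⟩
    have hlL : l ∈ L := mem_Icc.2 (abs_le.1 hl)
    rcases hε with rfl | rfl
    · exact Or.inl (Set.mem_biUnion (mem_erase.2 ⟨fun h => hne ⟨h, rfl⟩, hlL⟩) hω)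
    · exact Or.inr (Set.mem_biUnion hlL hω)
  calc P {ω | ∃ l ε : ℤ, (ε = 1 ∨ ε = -1) ∧ |l| ≤ M ∧ ¬(l = -(n : ℤ) ∧ ε = 1) ∧
        WordOccursAt (ξ ω) n l ε}
      ≤ ∑ l ∈ L.erase (-n), P {ω | WordOccursAt (ξ ω) n l 1} +
          ∑ l ∈ L, P {ω | WordOccursAt (ξ ω) n l (-1)} :=
        (measure_mono hcover).trans ((measure_union_le _ _).trans
          (add_le_add (measure_biUnion_finset_le _ _) (measure_biUnion_finset_le _ _)))
    _ ≤ ∑ _l ∈ L.erase (-n), (1 / 2) ^ (n + 1) + ∑ _l ∈ L, (1 / 2) ^ n := by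
        gcongr with l hl l
        · exact measure_wordOccursAt_forward_le hξmeas hξindep hξbern (mem_erase.1 hl).1
        · exact measure_wordOccursAt_backward_le hξmeas hξindep hξbern n l
    _ = (2 * M) * (1 / 2) ^ (n + 1) + (2 * M + 1) * (1 / 2) ^ n := by
        rw [sum_const, sum_const, card_erase_of_mem hnL, Int.card_Icc, nsmul_eq_mul,
          nsmul_eq_mul]
        congr <;> norm_cast <;> omega
    _ = M * (1 / 2) ^ n * (2 * (1 / 2)) + (2 * M + 1) * (1 / 2) ^ n := by ring
    _ = (3 * M + 1) * (1 / 2) ^ n := by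
        rw [ENNReal.mul_div_cancel two_ne_zero ENNReal.ofNat_ne_top]
        ring

end

/-- For an i.i.d. Bernoulli(1/2) scenery `ξ`, the probability that the word
`ξ(-n), ..., ξ(n)` occurs (read forwards or backwards) at a given other position is at
most `2^{-n}`, and the probability that it occurs at some other position within
`[-n^10, n^10]` is at most `4 n^10 2^{-n}`. -/
theorem word_unique_occurrence_bound
    {Ω : Type*} [MeasurableSpace Ω] (P : Measure Ω) [IsProbabilityMeasure P]
    (ξ : Ω → ℤ → Bool)
    (hξmeas : ∀ k : ℤ, Measurable fun ω => ξ ω k)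
    (hξindep : iIndepFun (fun k ω => ξ ω k) P)
    (hξbern : ∀ k : ℤ, P {ω | ξ ω k = true} = 1 / 2)
    (n : ℕ) (hn : 1 ≤ n) :
    (∀ l ε : ℤ, (ε = 1 ∨ ε = -1) → ¬(l = -(n : ℤ) ∧ ε = 1) →
      P {ω | ∀ j : ℕ, j ≤ 2 * n → ξ ω (-(n : ℤ) + j) = ξ ω (l + ε * j)} ≤
        (1 / 2 : ENNReal) ^ n) ∧
    P {ω | ∃ l ε : ℤ, (ε = 1 ∨ ε = -1) ∧ |l| ≤ (n : ℤ) ^ 10 ∧ ¬(l = -(n : ℤ) ∧ ε = 1) ∧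
        ∀ j : ℕ, j ≤ 2 * n → ξ ω (-(n : ℤ) + j) = ξ ω (l + ε * j)} ≤
      4 * (n : ENNReal) ^ 10 * (1 / 2 : ENNReal) ^ n := by
  refine ⟨fun l ε hε hne => measure_wordOccursAt_le hξmeas hξindep hξbern hε hne, ?_⟩
  have hunion := measure_exists_wordOccursAt_le hξmeas hξindep hξbern
    (Nat.le_self_pow (by norm_num) n : n ≤ n ^ 10)
  push_cast at hunion
  refine hunion.trans (mul_le_mul_left ?_ _)
  have hone : (1 : ENNReal) ≤ (n : ENNReal) ^ 10 := one_le_pow₀ (by exact_mod_cast hn)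
  calc 3 * (n : ENNReal) ^ 10 + 1 ≤ 3 * (n : ENNReal) ^ 10 + (n : ENNReal) ^ 10 := by gcongr
    _ = 4 * (n : ENNReal) ^ 10 := by ring
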